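/- Let G be a countable discrete group, let m be a mean on the bounded complex-valued functions on G (a linear functional with m(1) = 1, m(f) real for real-valued f, and m(f) ≥ 0 for pointwise nonnegative f), let H be a complex Hilbert space, and let N : B(H) → ℝ be a unitarily invariant seminorm such that for every c ≥ 0 the set {T ∈ B(H) : N(T) ≤ c} is closed in the weak operator topology. Let φ : G → B(H) satisfy sup_{x ∈ G} ‖φ(x)‖_op < ∞ and sup_{x ∈ G} N(φ(x)) < ∞, and let A ∈ B(H) satisfy ⟨Aξ, η⟩ = m(x ↦ ⟨φ(x)ξ, η⟩) for all ξ, η ∈ H. Then N(A) ≤ m(x ↦ N(φ(x))). -/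

import Mathlib

/-!
Finitely supported probability measures are weak*-dense in the means: by Hahn–Banach in the
finitely many coordinates that matter, `m` is approximated by `f ↦ ∑ w x f x` with `w ≥ 0`
simultaneously on `x ↦ N (φ x)` and on finitely many matrix coefficients of `φ`. Hence `A` is a
WOT-limit of the convex combinations `∑ w x φ x`, whose `N`-values are at most
`∑ w x N (φ x) ≈ m (N ∘ φ)` by the triangle inequality, and WOT-closedness of the `N`-balls
passes the bound to `A`.
-/

/-- A mean on the space of bounded complex-valued functions on `G`: a linear functional
`m` with `m 1 = 1`, `m f` real for real-valued `f`, and `m f ≥ 0` for pointwise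
nonnegative (real-valued) `f`. -/
structure MeanC (G : Type*) where
  m : (G → ℂ) → ℂ
  add : ∀ f g : G → ℂ, (∃ C, ∀ x, ‖f x‖ ≤ C) → (∃ C, ∀ x, ‖g x‖ ≤ C) →
    m (fun x => f x + g x) = m f + m g
  smul : ∀ (c : ℂ) (f : G → ℂ), (∃ C, ∀ x, ‖f x‖ ≤ C) →
    m (fun x => c * f x) = c * m f
  one : m (fun _ => 1) = 1
  real : ∀ f : G → ℂ, (∃ C, ∀ x, ‖f x‖ ≤ C) → (∀ x, (f x).im = 0) → (m f).im = 0
  pos : ∀ f : G → ℂ, (∃ C, ∀ x, ‖f x‖ ≤ C) → (∀ x, (f x).im = 0 ∧ 0 ≤ (f x).re) →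
    0 ≤ (m f).re

/-- A unitarily invariant seminorm on `B(H)`: a nonnegative, subadditive, absolutely
homogeneous function `N` with `N (U T V) = N T` for all unitaries `U, V`. -/
structure UnitarilyInvariantSeminorm (H : Type*) [NormedAddCommGroup H]
    [InnerProductSpace ℂ H] [CompleteSpace H] where
  N : (H →L[ℂ] H) → ℝ
  nonneg : ∀ T, 0 ≤ N T
  add_le : ∀ S T, N (S + T) ≤ N S + N T
  smul : ∀ (c : ℂ) (T : H →L[ℂ] H), N (c • T) = ‖c‖ * N T
  unitary_invariant : ∀ U V T : H →L[ℂ] H, U ∈ unitary (H →L[ℂ] H) →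
    V ∈ unitary (H →L[ℂ] H) → N (U * T * V) = N T

section NormBounded

variable {G E : Type*} [SeminormedAddCommGroup E]

def IsNormBounded (f : G → E) : Prop := ∃ C, ∀ x, ‖f x‖ ≤ C

theorem IsNormBounded.const (c : E) : IsNormBounded fun _ : G => c := ⟨‖c‖, fun _ => le_rfl⟩

theorem IsNormBounded.add {f g : G → E} (hf : IsNormBounded f) (hg : IsNormBounded g) :
    IsNormBounded fun x => f x + g x := by
  obtain ⟨C, hC⟩ := hf
  obtain ⟨D, hD⟩ := hg
  exact ⟨C + D, fun x => (norm_add_le _ _).trans (add_le_add (hC x) (hD x))⟩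

theorem IsNormBounded.sum {ι : Type*} (s : Finset ι) {f : ι → G → E}
    (hf : ∀ j, IsNormBounded (f j)) : IsNormBounded fun x => ∑ j ∈ s, f j x := by
  classical
  induction s using Finset.induction_on with
  | empty => simpa using IsNormBounded.const (0 : E)
  | insert j s hj ih => simpa only [Finset.sum_insert hj] using (hf j).add ih

theorem IsNormBounded.const_mul {R : Type*} [SeminormedRing R] {f : G → R} (c : R)
    (hf : IsNormBounded f) : IsNormBounded fun x => c * f x := by
  obtain ⟨C, hC⟩ := hf
  exact ⟨‖c‖ * C, fun x => (norm_mul_le _ _).trans (by gcongr; exact hC x)⟩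

theorem IsNormBounded.ofReal_re {f : G → ℂ} (hf : IsNormBounded f) :
    IsNormBounded fun x => ((f x).re : ℂ) := by
  obtain ⟨C, hC⟩ := hf
  exact ⟨C, fun x => by simpa using (Complex.abs_re_le_norm (f x)).trans (hC x)⟩

theorem IsNormBounded.ofReal_im {f : G → ℂ} (hf : IsNormBounded f) :
    IsNormBounded fun x => ((f x).im : ℂ) := by
  obtain ⟨C, hC⟩ := hf
  exact ⟨C, fun x => by simpa using (Complex.abs_im_le_norm (f x)).trans (hC x)⟩

theorem IsNormBounded.ofReal_of_nonneg {f : G → ℝ} (hf₀ : ∀ x, 0 ≤ f x)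
    (hf : ∃ C, ∀ x, f x ≤ C) : IsNormBounded fun x => (f x : ℂ) := by
  obtain ⟨C, hC⟩ := hf
  exact ⟨C, fun x => by simpa [abs_of_nonneg (hf₀ x)] using hC x⟩

end NormBounded

namespace MeanC

variable {G : Type*} (M : MeanC G)

theorem map_const (c : ℂ) : M.m (fun _ => c) = c := by
  simpa [M.one] using M.smul c (fun _ => 1) (IsNormBounded.const 1)

theorem map_sum_mul {ι : Type*} (s : Finset ι) (c : ι → ℂ) {f : ι → G → ℂ}
    (hf : ∀ j, IsNormBounded (f j)) :
    M.m (fun x => ∑ j ∈ s, c j * f j x) = ∑ j ∈ s, c j * M.m (f j) := by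
  classical
  induction s using Finset.induction_on with
  | empty => simpa using M.map_const 0
  | insert j s hj ih =>
    simp only [Finset.sum_insert hj]
    rw [M.add _ _ ((hf j).const_mul _) (IsNormBounded.sum s fun k => (hf k).const_mul (c k)),
      M.smul _ _ (hf j), ih]

theorem re_map_le {g : G → ℂ} (hg : IsNormBounded g) {r : ℝ} (hr : ∀ x, (g x).re ≤ r) :
    (M.m g).re ≤ r := by
  set a : G → ℂ := fun x => ((g x).re : ℂ)
  set b : G → ℂ := fun x => ((g x).im : ℂ)
  have ha : IsNormBounded a := hg.ofReal_re
  have hb : IsNormBounded b := hg.ofReal_im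
  have hre : (M.m g).re = (M.m a).re := by
    have hg_eq : g = fun x => a x + Complex.I * b x := by
      funext x
      rw [mul_comm, Complex.re_add_im]
    have hb_real : (M.m b).im = 0 := M.real b hb fun x => Complex.ofReal_im _
    rw [hg_eq, M.add _ _ ha (hb.const_mul _), M.smul _ _ hb]
    simp [hb_real]
  have hpos : 0 ≤ (M.m fun x => (r : ℂ) + (-1) * a x).re :=
    M.pos _ ((IsNormBounded.const _).add (ha.const_mul _)) fun x => by simpa [a] using hr x
  rw [M.add _ _ (IsNormBounded.const _) (ha.const_mul _), M.map_const, M.smul _ _ ha] at hpos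
  simp only [Complex.add_re, Complex.ofReal_re, neg_one_mul, Complex.neg_re] at hpos
  linarith

theorem mem_closure_convexHull {ι : Type*} [Fintype ι] {f : ι → G → ℂ}
    (hf : ∀ j, IsNormBounded (f j)) :
    (fun j => M.m (f j)) ∈ closure (convexHull ℝ (Set.range fun x j => f j x)) := by
  classical
  by_contra hp
  obtain ⟨L, u, hL_hull, hL_p⟩ := RCLike.geometric_hahn_banach_closed_point (𝕜 := ℂ)
    (convex_convexHull ℝ _).closure isClosed_closure hp
  set c : ι → ℂ := fun j => L (Pi.single j 1)
  have hL : ∀ z : ι → ℂ, L z = ∑ j, c j * z j := fun z => by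
    conv_lhs => rw [← Finset.univ_sum_single z]
    rw [map_sum]
    refine Finset.sum_congr rfl fun j _ => ?_
    rw [mul_comm, ← smul_eq_mul, ← map_smul, ← Pi.single_smul', smul_eq_mul, mul_one]
  have hle : (M.m fun x => ∑ j, c j * f j x).re ≤ u :=
    M.re_map_le (IsNormBounded.sum _ fun j => (hf j).const_mul _) fun x => by
      rw [← hL]
      exact (hL_hull _ (subset_closure (subset_convexHull ℝ _ ⟨x, rfl⟩))).le
  rw [M.map_sum_mul _ _ hf, ← hL] at hle
  exact lt_irrefl u (hL_p.trans_le hle)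

theorem exists_sum_mul_near {ι : Type*} [Fintype ι] {f : ι → G → ℂ}
    (hf : ∀ j, IsNormBounded (f j)) {ε : ℝ} (hε : 0 < ε) :
    ∃ (s : Finset G) (w : G → ℝ), (∀ x ∈ s, 0 ≤ w x) ∧
      ∀ j, ‖∑ x ∈ s, (w x : ℂ) * f j x - M.m (f j)‖ < ε := by
  obtain ⟨q, hq, hdist⟩ := Metric.mem_closure_iff.mp (M.mem_closure_convexHull hf) ε hε
  rw [convexHull_range_eq_exists_affineCombination] at hq
  obtain ⟨s, w, hw0, hw1, rfl⟩ := hq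
  rw [Finset.affineCombination_eq_linear_combination _ _ _ hw1] at hdist
  refine ⟨s, w, hw0, fun j => ?_⟩
  calc ‖∑ x ∈ s, (w x : ℂ) * f j x - M.m (f j)‖
      = dist (M.m (f j)) ((∑ x ∈ s, w x • fun j => f j x) j) := by
        simp [dist_eq_norm', Finset.sum_apply, Complex.real_smul]
    _ ≤ _ := dist_le_pi_dist (fun j => M.m (f j)) _ j
    _ < ε := hdist

end MeanC

namespace UnitarilyInvariantSeminorm

variable {H : Type*} [NormedAddCommGroup H] [InnerProductSpace ℂ H] [CompleteSpace H]
  (𝒩 : UnitarilyInvariantSeminorm H)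

theorem map_zero : 𝒩.N 0 = 0 := by
  simpa using 𝒩.smul 0 0

theorem map_sum_smul_le {ι : Type*} (s : Finset ι) {w : ι → ℝ} (hw : ∀ i ∈ s, 0 ≤ w i)
    (T : ι → H →L[ℂ] H) : 𝒩.N (∑ i ∈ s, (w i : ℂ) • T i) ≤ ∑ i ∈ s, w i * 𝒩.N (T i) :=
  (Finset.le_sum_of_subadditive 𝒩.N 𝒩.map_zero.le 𝒩.add_le s _).trans_eq
    (Finset.sum_congr rfl fun i hi => by rw [𝒩.smul, Complex.norm_of_nonneg (hw i hi)])

end UnitarilyInvariantSeminorm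

section

open scoped InnerProductSpace

theorem IsNormBounded.inner_apply {G 𝕜 E F : Type*} [RCLike 𝕜] [SeminormedAddCommGroup E]
    [NormedSpace 𝕜 E] [NormedAddCommGroup F] [InnerProductSpace 𝕜 F] {φ : G → E →L[𝕜] F}
    (hφ : IsNormBounded φ) (ξ : E) (η : F) : IsNormBounded fun x => ⟪η, φ x ξ⟫_𝕜 := by
  obtain ⟨C, hC⟩ := hφ
  refine ⟨‖η‖ * (C * ‖ξ‖), fun x => (norm_inner_le_norm _ _).trans ?_⟩
  gcongr
  exact (φ x).le_of_opNorm_le (hC x) ξ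

open Filter in
theorem ContinuousLinearMapWOT.mem_closure_of_forall_exists_inner_near {𝕜 E F : Type*}
    [RCLike 𝕜] [AddCommGroup E] [TopologicalSpace E] [Module 𝕜 E] [NormedAddCommGroup F]
    [InnerProductSpace 𝕜 F] [CompleteSpace F] {S : Set (E →WOT[𝕜] F)} {A : E →WOT[𝕜] F}
    (h : ∀ (s : Finset (F × E)) (δ : ℝ), 0 < δ →
      ∃ T ∈ S, ∀ p ∈ s, dist ⟪p.1, T p.2⟫_𝕜 ⟪p.1, A p.2⟫_𝕜 < δ) :
    A ∈ closure S := by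
  classical
  choose T hTS hT using fun q : Finset (F × E) × ℕ => h q.1 (1 / (q.2 + 1)) Nat.one_div_pos_of_nat
  refine mem_closure_of_tendsto (b := atTop)
    (tendsto_iff_forall_inner_apply_tendsto.mpr fun x y => ?_) (Eventually.of_forall hTS)
  refine Metric.tendsto_atTop.mpr fun ε hε => ?_
  obtain ⟨k, hk⟩ := exists_nat_one_div_lt hε
  refine ⟨({(y, x)}, k), fun q hq => (hT q (y, x) (Finset.singleton_subset_iff.mp hq.1)).trans ?_⟩
  calc 1 / ((q.2 : ℝ) + 1) ≤ 1 / ((k : ℝ) + 1) := by gcongr; exact hq.2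
    _ < ε := hk

variable {G H : Type*} [NormedAddCommGroup H] [InnerProductSpace ℂ H] [CompleteSpace H]
  (M : MeanC G) (𝒩 : UnitarilyInvariantSeminorm H) {φ : G → H →L[ℂ] H}

theorem exists_uiSeminorm_lt_and_inner_near (hop : IsNormBounded φ)
    (hN : ∃ C, ∀ x, 𝒩.N (φ x) ≤ C) {A : H →L[ℂ] H}
    (hA : ∀ ξ η : H, ⟪η, A ξ⟫_ℂ = M.m (fun x => ⟪η, φ x ξ⟫_ℂ))
    (s : Finset (H × H)) {δ : ℝ} (hδ : 0 < δ) :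
    ∃ T : H →L[ℂ] H, 𝒩.N T < (M.m fun x => (𝒩.N (φ x) : ℂ)).re + δ ∧
      ∀ p ∈ s, dist ⟪p.1, T p.2⟫_ℂ ⟪p.1, A p.2⟫_ℂ < δ := by
  let f : Option s → G → ℂ := fun j =>
    j.elim (fun x => (𝒩.N (φ x) : ℂ)) fun p x => ⟪p.1.1, φ x p.1.2⟫_ℂ
  have hf : ∀ j, IsNormBounded (f j)
    | none => .ofReal_of_nonneg (fun x => 𝒩.nonneg _) hN
    | some p => hop.inner_apply _ _
  obtain ⟨t, w, hw, hclose⟩ := M.exists_sum_mul_near hf hδ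
  refine ⟨∑ x ∈ t, (w x : ℂ) • φ x, ?_, fun p hp => ?_⟩
  · calc 𝒩.N (∑ x ∈ t, (w x : ℂ) • φ x)
        ≤ ∑ x ∈ t, w x * 𝒩.N (φ x) := 𝒩.map_sum_smul_le t hw φ
      _ = (M.m (f none)).re + (∑ x ∈ t, (w x : ℂ) * f none x - M.m (f none)).re := by
        simp [f]
      _ < (M.m fun x => (𝒩.N (φ x) : ℂ)).re + δ :=
        add_lt_add_right ((Complex.re_le_norm _).trans_lt (hclose none)) _
  · simpa [f, hA, dist_eq_norm, inner_sum, inner_smul_right] using hclose (some ⟨p, hp⟩)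

end

open scoped InnerProductSpace in
theorem uiSeminorm_mean_le_general
    {G : Type*} (M : MeanC G)
    {H : Type*} [NormedAddCommGroup H] [InnerProductSpace ℂ H] [CompleteSpace H]
    (𝒩 : UnitarilyInvariantSeminorm H)
    (hclosed : ∀ c : ℝ, 0 ≤ c →
      IsClosed {T : H →WOT[ℂ] H | 𝒩.N (ContinuousLinearMapWOT.toCLM T) ≤ c})
    (φ : G → (H →L[ℂ] H))
    (hop : ∃ C, ∀ x : G, ‖φ x‖ ≤ C)
    (hN : ∃ C, ∀ x : G, 𝒩.N (φ x) ≤ C)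
    (A : H →L[ℂ] H)
    (hA : ∀ ξ η : H, ⟪η, A ξ⟫_ℂ = M.m (fun x => ⟪η, φ x ξ⟫_ℂ)) :
    𝒩.N A ≤ (M.m (fun x => (𝒩.N (φ x) : ℂ))).re := by
  set c := (M.m fun x => (𝒩.N (φ x) : ℂ)).re
  have hc : 0 ≤ c :=
    M.pos _ (IsNormBounded.ofReal_of_nonneg (fun x => 𝒩.nonneg _) hN) fun x => by simp [𝒩.nonneg]
  refine le_of_forall_pos_le_add fun ε hε => ?_
  have hA_mem : ContinuousLinearMapWOT.ofCLM A ∈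
      closure {T : H →WOT[ℂ] H | 𝒩.N (ContinuousLinearMapWOT.toCLM T) ≤ c + ε} :=
    ContinuousLinearMapWOT.mem_closure_of_forall_exists_inner_near fun s δ hδ => by
      obtain ⟨T, hNT, hT⟩ := exists_uiSeminorm_lt_and_inner_near M 𝒩 hop hN hA s (lt_min hδ hε)
      exact ⟨ContinuousLinearMapWOT.ofCLM T, (hNT.trans_le (by gcongr; exact min_le_right _ _)).le,
        fun p hp => (hT p hp).trans_le (min_le_left _ _)⟩
  exact (hclosed (c + ε) (by positivity)).closure_subset hA_mem

open scoped InnerProductSpace in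
/-- If the balls of a unitarily invariant seminorm `N` are closed in the weak operator
topology, then `N` of the mean of a uniformly bounded family `φ : G → B(H)` (defined
weakly via a mean `m`) is at most the mean of `x ↦ N (φ x)`. -/
theorem uiSeminorm_mean_le
    {G : Type*} [Group G] [Countable G] (M : MeanC G)
    {H : Type*} [NormedAddCommGroup H] [InnerProductSpace ℂ H] [CompleteSpace H]
    (𝒩 : UnitarilyInvariantSeminorm H)
    (hclosed : ∀ c : ℝ, 0 ≤ c →
      IsClosed {T : H →WOT[ℂ] H | 𝒩.N (ContinuousLinearMapWOT.toCLM T) ≤ c})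
    (φ : G → (H →L[ℂ] H))
    (hop : ∃ C, ∀ x : G, ‖φ x‖ ≤ C)
    (hN : ∃ C, ∀ x : G, 𝒩.N (φ x) ≤ C)
    (A : H →L[ℂ] H)
    (hA : ∀ ξ η : H, ⟪η, A ξ⟫_ℂ = M.m (fun x => ⟪η, φ x ξ⟫_ℂ)) :
    𝒩.N A ≤ (M.m (fun x => (𝒩.N (φ x) : ℂ))).re :=
  uiSeminorm_mean_le_general M 𝒩 hclosed φ hop hN A hA
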